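/- arXiv:1202.3963 — 2 statements merged into one kernel-verified Lean document; each statement's English description precedes it below -/
import Mathlib

section
/- (Fejér) Let n ≥ 2 and let F(e^{it}) = ∑_{j=-(n-1)}^{n-1} c_j e^{ijt} be a trigonometric polynomial satisfying F(e^{it}) ≥ 0 for all real t. Then |c_1| ≤ c_0 · cos(π/(n+1)). -/
/-!
Sampling a trigonometric polynomial at `N` equally spaced points and averaging against
`e^{-ikt}` recovers `c_k` exactly as long as no other frequency of the polynomial is congruent
to `k` modulo `N`, because sums of `N`-th roots of unity vanish. In particular a real
polynomial has `c_{-k} = conj c_k`.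

Put `α = π / (n + 1)` and average `F` against the weight `cos α - cos (t - θ)` over the `n + 1`
points `t = θ + (2m - 1) α`, `0 ≤ m ≤ n`. The weight is nonnegative at these points, and it only
has the frequencies `0, ±1`, so the average equals `c_0 cos α - Re (e^{iθ} c_1)`. Hence
`Re (e^{iθ} c_1) ≤ c_0 cos α` for every `θ`, and `θ = -arg c_1` gives the theorem.
-/

open Complex Finset
open scoped ComplexConjugate

namespace IsPrimitiveRoot

variable {K : Type*} [Field K] {ζ : K} {N : ℕ}

theorem sum_zpow_pow (hζ : IsPrimitiveRoot ζ N) (j : ℤ) :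
    ∑ m ∈ range N, (ζ ^ j) ^ m = if (N : ℤ) ∣ j then (N : K) else 0 := by
  split_ifs with hj
  · simp [(hζ.zpow_eq_one_iff_dvd j).2 hj]
  · have hζN : (ζ ^ j) ^ N = 1 := by
      rw [← zpow_natCast, ← zpow_mul, mul_comm, zpow_mul, hζ.zpow_eq_one, one_zpow]
    rw [geom_sum_eq (mt (hζ.zpow_eq_one_iff_dvd j).1 hj), hζN, sub_self, zero_div]

end IsPrimitiveRoot

noncomputable def trigPoly (s : Finset ℤ) (c : ℤ → ℂ) (t : ℝ) : ℂ :=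
  ∑ j ∈ s, c j * exp (I * j * t)

theorem exp_I_int_mul_grid (N : ℕ) (j : ℤ) (β : ℝ) (m : ℕ) :
    exp (I * j * ↑(β + 2 * Real.pi * m / N)) =
      exp (I * j * β) * (exp (2 * Real.pi * I / N) ^ j) ^ m := by
  rw [← exp_int_mul, ← exp_nat_mul, ← exp_add]
  congr 1
  push_cast
  ring

theorem sum_exp_mul_trigPoly_grid {s : Finset ℤ} {k : ℤ} {N : ℕ} (c : ℤ → ℂ) (β : ℝ)
    (hk : k ∈ s) (hs : ∀ j ∈ s, |j - k| < N) :
    ∑ m ∈ range N, exp (-(I * k * ↑(β + 2 * Real.pi * m / N))) *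
      trigPoly s c (β + 2 * Real.pi * m / N) = N * c k := by
  have hN : N ≠ 0 := by simpa using (hs k hk).ne'
  have hζ := Complex.isPrimitiveRoot_exp N hN
  have hshift : ∀ t : ℝ, exp (-(I * k * t)) * trigPoly s c t =
      ∑ j ∈ s, c j * exp (I * ↑(j - k) * t) := fun t => by
    rw [trigPoly, mul_sum]
    refine sum_congr rfl fun j _ => ?_
    rw [mul_left_comm, ← exp_add]
    push_cast
    ring_nf
  simp only [hshift, exp_I_int_mul_grid]
  rw [sum_comm]
  simp only [← mul_assoc, ← mul_sum, hζ.sum_zpow_pow]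
  rw [sum_eq_single_of_mem k hk]
  · simp [mul_comm]
  · intro j hj hjk
    rw [if_neg fun hdvd => hjk (sub_eq_zero.1 (Int.eq_zero_of_abs_lt_dvd hdvd (hs j hj))),
      mul_zero]

theorem coeff_neg_eq_conj_of_im_trigPoly_eq_zero {s : Finset ℤ} {c : ℤ → ℂ}
    (hreal : ∀ t, (trigPoly s c t).im = 0) {k : ℤ} (hk : k ∈ s) (hk' : -k ∈ s) :
    c (-k) = conj (c k) := by
  obtain ⟨M, hM⟩ : ∃ M : ℤ, ∀ j ∈ s, |j| ≤ M :=
    ⟨∑ j ∈ s, |j|, fun j hj => single_le_sum (fun i _ => abs_nonneg i) hj⟩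
  set N := (2 * M + 1).toNat
  have hN : ∀ i ∈ s, ∀ j ∈ s, |j - i| < N := fun i hi j hj => by
    have hi' := abs_le.1 (hM i hi)
    have hj' := abs_le.1 (hM j hj)
    rw [abs_lt]; omega
  have hN0 : (N : ℂ) ≠ 0 := Nat.cast_ne_zero.2 (by simpa using (hN k hk k hk).ne')
  apply mul_left_cancel₀ hN0
  rw [← sum_exp_mul_trigPoly_grid c 0 hk' (hN _ hk'), ← Complex.conj_natCast, ← map_mul,
    ← sum_exp_mul_trigPoly_grid c 0 hk (hN _ hk), map_sum]
  refine sum_congr rfl fun m _ => ?_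
  rw [map_mul, Complex.conj_eq_iff_im.2 (hreal _), ← exp_conj]
  congr 2
  simp [map_ofNat]

theorem Real.cos_le_cos_of_le_of_le_two_pi_sub {α x : ℝ} (hα : 0 ≤ α) (h₁ : α ≤ x)
    (h₂ : x ≤ 2 * Real.pi - α) : Real.cos x ≤ Real.cos α := by
  rcases le_total x Real.pi with hx | hx
  · exact Real.cos_le_cos_of_nonneg_of_le_pi hα hx h₁
  · rw [← Real.cos_two_pi_sub]
    exact Real.cos_le_cos_of_nonneg_of_le_pi hα (by linarith) (by linarith)

theorem cos_two_pi_mul_div_sub_le {n m : ℕ} (hm : m ≤ n) :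
    Real.cos (2 * Real.pi * m / (n + 1 : ℕ) - Real.pi / (n + 1)) ≤
      Real.cos (Real.pi / (n + 1)) := by
  have hα : 0 < Real.pi / (n + 1) := by positivity
  have hx : 2 * Real.pi * m / (n + 1 : ℕ) - Real.pi / (n + 1) =
      (2 * m - 1) * (Real.pi / (n + 1)) := by
    push_cast; ring
  rw [hx]
  rcases m.eq_zero_or_pos with rfl | hm₀
  · simp
  · have hnα : (n + 1) * (Real.pi / (n + 1)) = Real.pi := by field_simp
    have : (1 : ℝ) ≤ m := by exact_mod_cast hm₀
    have : (m : ℝ) ≤ n := by exact_mod_cast hm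
    apply Real.cos_le_cos_of_le_of_le_two_pi_sub hα.le <;> nlinarith

theorem sum_sub_cos_mul_trigPoly_grid {s : Finset ℤ} {N : ℕ} (c : ℤ → ℂ) (a θ β : ℝ)
    (h₀ : 0 ∈ s) (h₁ : 1 ∈ s) (hneg : -1 ∈ s) (hs : ∀ j ∈ s, |j| + 1 < N) :
    ∑ m ∈ range N, ((a - Real.cos (β + 2 * Real.pi * m / N - θ) : ℝ) : ℂ) *
        trigPoly s c (β + 2 * Real.pi * m / N) =
      N * (a * c 0 - (exp (-(I * θ)) * c (-1) + exp (I * θ) * c 1) / 2) := by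
  set e : ℤ → ℝ → ℂ := fun k t => exp (-(I * k * t))
  have hweight : ∀ t : ℝ, ((a - Real.cos (t - θ) : ℝ) : ℂ) =
      a * e 0 t - exp (-(I * θ)) / 2 * e (-1) t - exp (I * θ) / 2 * e 1 t := fun t => by
    have hfwd : exp (-(I * θ)) * e (-1) t = exp (↑(t - θ) * I) := by
      rw [← exp_add]; push_cast; ring_nf
    have hbwd : exp (I * θ) * e 1 t = exp (-↑(t - θ) * I) := by
      rw [← exp_add]; push_cast; ring_nf
    rw [ofReal_sub, ofReal_cos, Complex.cos, ← hfwd, ← hbwd]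
    simp only [e, Int.cast_zero, mul_zero, zero_mul, neg_zero, exp_zero]
    ring
  have hk : ∀ k ∈ ({0, 1, -1} : Finset ℤ), ∀ j ∈ s, |j - k| < N := fun k hk j hj => by
    have := abs_lt.1 (lt_sub_right_of_add_lt (hs j hj))
    simp only [mem_insert, mem_singleton] at hk
    rw [abs_lt]; omega
  set G : ℕ → ℂ := fun m => trigPoly s c (β + 2 * Real.pi * m / N)
  set t : ℕ → ℝ := fun m => β + 2 * Real.pi * m / N
  calc ∑ m ∈ range N, ((a - Real.cos (t m - θ) : ℝ) : ℂ) * G m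
      = a * ∑ m ∈ range N, e 0 (t m) * G m
          - exp (-(I * θ)) / 2 * ∑ m ∈ range N, e (-1) (t m) * G m
          - exp (I * θ) / 2 * ∑ m ∈ range N, e 1 (t m) * G m := by
        simp only [mul_sum, ← sum_sub_distrib, hweight]
        refine sum_congr rfl fun m _ => by ring
    _ = N * (a * c 0 - (exp (-(I * θ)) * c (-1) + exp (I * θ) * c 1) / 2) := by
        rw [sum_exp_mul_trigPoly_grid c β h₀ (hk 0 (by simp)),
          sum_exp_mul_trigPoly_grid c β h₁ (hk 1 (by simp)),
          sum_exp_mul_trigPoly_grid c β hneg (hk (-1) (by simp))]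
        ring

theorem re_exp_mul_coeff_one_le {n : ℕ} (hn : 2 ≤ n) {c : ℤ → ℂ} (hsymm : c (-1) = conj (c 1))
    (hpos : ∀ t, 0 ≤ (trigPoly (Icc (-(n : ℤ) + 1) ((n : ℤ) - 1)) c t).re) (θ : ℝ) :
    (exp (I * θ) * c 1).re ≤ (c 0).re * Real.cos (Real.pi / (n + 1)) := by
  set s := Icc (-(n : ℤ) + 1) ((n : ℤ) - 1)
  set α := Real.pi / (n + 1)
  set z := exp (I * θ) * c 1
  have hmem : ∀ k : ℤ, -1 ≤ k → k ≤ 1 → k ∈ s := fun k h₁ h₂ => by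
    rw [mem_Icc]; omega
  have hs : ∀ j ∈ s, |j| + 1 < ((n + 1 : ℕ) : ℤ) := fun j hj => by
    rw [mem_Icc] at hj
    have : |j| < n := abs_lt.2 ⟨by omega, by omega⟩
    push_cast; omega
  have hconj : exp (-(I * θ)) * c (-1) + z = (2 * z.re : ℝ) := by
    rw [← add_conj, add_comm]
    congr 1
    rw [hsymm, map_mul, ← exp_conj]
    simp
  have hsum := sum_sub_cos_mul_trigPoly_grid c (Real.cos α) θ (θ - α)
    (hmem 0 (by omega) (by omega)) (hmem 1 (by omega) le_rfl) (hmem (-1) le_rfl (by omega)) hs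
  rw [hconj] at hsum
  have hnonneg : 0 ≤ (∑ m ∈ range (n + 1),
      ((Real.cos α - Real.cos (θ - α + 2 * Real.pi * m / (n + 1 : ℕ) - θ) : ℝ) : ℂ) *
        trigPoly s c (θ - α + 2 * Real.pi * m / (n + 1 : ℕ))).re := by
    rw [re_sum]
    refine sum_nonneg fun m hm => ?_
    rw [re_ofReal_mul]
    refine mul_nonneg (sub_nonneg.2 ?_) (hpos _)
    rw [show θ - α + 2 * Real.pi * m / (n + 1 : ℕ) - θ = 2 * Real.pi * m / (n + 1 : ℕ) - α by ring]
    exact cos_two_pi_mul_div_sub_le (Nat.lt_succ_iff.1 (mem_range.1 hm))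
  rw [hsum, ← ofReal_natCast, re_ofReal_mul, sub_re, re_ofReal_mul, div_ofNat_re,
    ofReal_re, mul_nonneg_iff_of_pos_left (by positivity)] at hnonneg
  linarith

/-- **Fejér's inequality.** If `∑_{j=-(n-1)}^{n-1} c_j e^{ijt}` is a trigonometric
polynomial which is nonnegative on the torus, then `|c_1| ≤ c_0 · cos (π / (n+1))`. -/
theorem fejer_inequality (n : ℕ) (hn : 2 ≤ n) (c : ℤ → ℂ)
    (hpos : ∀ t : ℝ,
      (∑ j ∈ Finset.Icc (-(n : ℤ) + 1) ((n : ℤ) - 1),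
          c j * Complex.exp (Complex.I * (j : ℂ) * (t : ℂ))).im = 0 ∧
      0 ≤ (∑ j ∈ Finset.Icc (-(n : ℤ) + 1) ((n : ℤ) - 1),
          c j * Complex.exp (Complex.I * (j : ℂ) * (t : ℂ))).re) :
    ‖c 1‖ ≤ (c 0).re * Real.cos (Real.pi / ((n : ℝ) + 1)) := by
  have hsymm : c (-1) = conj (c 1) :=
    coeff_neg_eq_conj_of_im_trigPoly_eq_zero (fun t => (hpos t).1)
      (by rw [mem_Icc]; omega) (by rw [mem_Icc]; omega)
  have hrot : exp (I * ↑(-arg (c 1))) * c 1 = ‖c 1‖ := by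
    nth_rw 2 [← norm_mul_exp_arg_mul_I (c 1)]
    rw [mul_left_comm, ← exp_add, show I * ↑(-arg (c 1)) + arg (c 1) * I = 0 by push_cast; ring,
      exp_zero, mul_one]
  have key := re_exp_mul_coeff_one_le hn hsymm (fun t => (hpos t).2) (-arg (c 1))
  rwa [hrot, ofReal_re] at key
end

section
/- Let n ≥ 4 be an integer and 0 ≤ α ≤ √(cos(2π/(n+1))). Let t₁^{(n)} be the smallest zero in (0, π) of q_{n,α}(t) = sin((n+1)t) − 2α·sin(nt) + α²·sin((n−1)t). Then w(J_n(α)) = α(cos t₁^{(n)} − α) / (1 − 2α·cos t₁^{(n)} + α²). -/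
/-- The numerical radius of an `n × n` complex matrix `A`:
`w(A) = sup { |⟨Ax, x⟩| : ‖x‖ = 1 }` (standard Hermitian inner product on `ℂⁿ`). -/
noncomputable def numRadius {n : ℕ} (A : Matrix (Fin n) (Fin n) ℂ) : ℝ :=
  sSup { r : ℝ | ∃ x : EuclideanSpace ℂ (Fin n), ‖x‖ = 1 ∧
    r = ‖(inner ℂ x (Matrix.toEuclideanLin A x) : ℂ)‖ }

/-- The strictly upper triangular KMS-type matrix `J_n(α)` with `(r,s)` entry
`α^{s−r}` for `s > r` and `0` otherwise. -/
noncomputable def Jmat (n : ℕ) (α : ℝ) : Matrix (Fin n) (Fin n) ℂ :=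
  Matrix.of fun r s : Fin n => if r < s then ((α : ℂ) ^ ((s : ℕ) - (r : ℕ))) else 0

/-!
With `z(s) = e^{is} - α` one has `q_{n,α}(s) = |z(s)|² sin((n - 1)s + 2 arg z(s))`. The phase
`(n - 1)s + 2 arg z(s)` is continuous, vanishes at `0` and is positive on `(0, π)`; it cannot reach
`2π` before `t₁` without crossing `π` (an earlier zero of `q`), so it equals `π` at `t₁`. With
`φ = arg z(t₁)` this gives `sin(φ - t₁) = α sin φ` and `(n - 1)t₁ + 2φ = π`, exactly the boundary
conditions under which `u_j = sin(j t₁ + φ) > 0` is an eigenvector of the KMS matrix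
`K = (α^{|i-j|})` with eigenvalue `(1 - α²)/(1 - 2α cos t₁ + α²)`.

Since `J + Jᵀ = K - 1` has nonnegative entries, `|⟨Jx, x⟩| ≤ ⟨J|x|, |x|⟩`, and a positive
eigenvector of a symmetric matrix with nonnegative off-diagonal entries belongs to its largest
eigenvalue. Hence `w(J)` is half the eigenvalue of `K - 1` at `u`.
-/

open Matrix Finset Real

section NonnegMatrix

variable {ι : Type*} [Fintype ι]

theorem dotProduct_mulVec_le_of_mulVec_eq_smul {S : Matrix ι ι ℝ} (hS : S.IsSymm)
    (hS0 : ∀ i j, i ≠ j → 0 ≤ S i j) {u : ι → ℝ} (hu : ∀ i, 0 < u i) {c : ℝ}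
    (hSu : S *ᵥ u = c • u) (y : ι → ℝ) :
    y ⬝ᵥ S *ᵥ y ≤ c * (y ⬝ᵥ y) := by
  -- `c ‖y‖² - yᵀ S y = ½ ∑ᵢⱼ S i j * u i * u j * (y i / u i - y j / u j) ²`
  set f : ι → ι → ℝ := fun i j => S i j * (u j / u i * y i ^ 2 - y i * y j)
  have hrow : ∀ i, ∑ j, S i j * u j = c * u i := fun i => congrFun hSu i
  have hgap : c * (y ⬝ᵥ y) - y ⬝ᵥ S *ᵥ y = ∑ i, ∑ j, f i j := by
    simp only [dotProduct, mulVec, mul_sum, ← sum_sub_distrib]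
    refine sum_congr rfl fun i _ => ?_
    have hui := (hu i).ne'
    have : c * (y i * y i) = y i ^ 2 / u i * ∑ j, S i j * u j := by
      rw [hrow i]; field_simp
    rw [this, mul_sum, ← sum_sub_distrib]
    refine sum_congr rfl fun j _ => ?_
    simp only [f]
    field_simp
  have hpair : ∀ i j, 0 ≤ f i j + f j i := by
    intro i j
    rcases eq_or_ne i j with rfl | hij
    · simp [f, (hu i).ne', sq]
    have hui := (hu i).ne'
    have huj := (hu j).ne'
    have : f i j + f j i = S i j * (u j * y i - u i * y j) ^ 2 / (u i * u j) := by
      simp only [f, hS.apply i j]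
      field_simp
      ring
    rw [this]
    exact div_nonneg (mul_nonneg (hS0 i j hij) (sq_nonneg _)) (mul_pos (hu i) (hu j)).le
  have hsymm : ∑ i, ∑ j, (f i j + f j i) = 2 * ∑ i, ∑ j, f i j := by
    rw [two_mul]
    simp only [sum_add_distrib]
    rw [sum_comm (f := fun i j => f j i)]
  have := sum_nonneg fun i (_ : i ∈ univ) => sum_nonneg fun j (_ : j ∈ univ) => hpair i j
  linarith

theorem dotProduct_add_transpose_mulVec (B : Matrix ι ι ℝ) (y : ι → ℝ) :
    y ⬝ᵥ (B + Bᵀ) *ᵥ y = 2 * (y ⬝ᵥ B *ᵥ y) := by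
  rw [add_mulVec, dotProduct_add, dotProduct_mulVec y Bᵀ, vecMul_transpose, dotProduct_comm]
  ring

theorem norm_sq_toLp_ofReal (y : ι → ℝ) :
    ‖(WithLp.toLp 2 fun i => (y i : ℂ) : EuclideanSpace ℂ ι)‖ ^ 2 = y ⬝ᵥ y := by
  rw [EuclideanSpace.norm_sq_eq]
  simp [dotProduct, sq]

variable [DecidableEq ι]

theorem norm_inner_toEuclideanLin_map_ofReal_le {B : Matrix ι ι ℝ} (hB : ∀ i j, 0 ≤ B i j)
    (x : EuclideanSpace ℂ ι) :
    ‖inner ℂ x (toEuclideanLin (B.map (↑)) x)‖ ≤ (‖x ·‖) ⬝ᵥ B *ᵥ (‖x ·‖) := by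
  rw [EuclideanSpace.inner_eq_star_dotProduct, toLpLin_apply]
  refine (norm_sum_le _ _).trans (sum_le_sum fun i _ => ?_)
  simp only [mulVec, dotProduct, map_apply, Pi.star_apply, norm_mul, RCLike.star_def,
    RCLike.norm_conj, mul_comm ‖x i‖]
  gcongr
  refine (norm_sum_le _ _).trans_eq (sum_congr rfl fun j _ => ?_)
  rw [norm_mul, Complex.norm_real, Real.norm_of_nonneg (hB i j)]

theorem inner_toEuclideanLin_map_ofReal (B : Matrix ι ι ℝ) (y : ι → ℝ) :
    inner ℂ (WithLp.toLp 2 (fun i => (y i : ℂ)))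
        (toEuclideanLin (B.map (↑)) (WithLp.toLp 2 fun i => (y i : ℂ)))
      = ((y ⬝ᵥ B *ᵥ y : ℝ) : ℂ) := by
  rw [EuclideanSpace.inner_eq_star_dotProduct, toLpLin_apply, dotProduct_comm]
  simp [dotProduct, mulVec]

end NonnegMatrix

theorem numRadius_map_ofReal_eq {n : ℕ} [NeZero n] {B : Matrix (Fin n) (Fin n) ℝ}
    (hB : ∀ i j, 0 ≤ B i j) {u : Fin n → ℝ} (hu : ∀ i, 0 < u i) {r : ℝ}
    (hBu : (B + Bᵀ) *ᵥ u = (2 * r) • u) :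
    numRadius (B.map (↑)) = r := by
  have hS0 : ∀ i j, i ≠ j → 0 ≤ (B + Bᵀ) i j := fun i j _ => add_nonneg (hB i j) (hB j i)
  have hquad : ∀ y, y ⬝ᵥ B *ᵥ y ≤ r * (y ⬝ᵥ y) := fun y => by
    have := dotProduct_mulVec_le_of_mulVec_eq_smul (isSymm_add_transpose_self B) hS0 hu hBu y
    rw [dotProduct_add_transpose_mulVec] at this
    linarith
  have huu : 0 < u ⬝ᵥ u :=
    sum_pos (fun i _ => mul_pos (hu i) (hu i)) univ_nonempty
  set a : Fin n → ℝ := (√(u ⬝ᵥ u))⁻¹ • u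
  have haa : a ⬝ᵥ a = 1 := by
    simp only [a, dotProduct_smul, smul_dotProduct, smul_eq_mul, ← mul_assoc, ← mul_inv,
      Real.mul_self_sqrt huu.le, inv_mul_cancel₀ huu.ne']
  have haBa : a ⬝ᵥ B *ᵥ a = r := by
    have hBa : (B + Bᵀ) *ᵥ a = (2 * r) • a := by
      simp only [a, mulVec_smul, hBu, smul_comm (2 * r)]
    have := dotProduct_add_transpose_mulVec B a
    rw [hBa, dotProduct_smul, haa, smul_eq_mul] at this
    linarith
  have hr : 0 ≤ r := by
    rw [← haBa]
    have ha : 0 ≤ a := fun i => mul_nonneg (by positivity) (hu i).le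
    exact dotProduct_nonneg_of_nonneg ha fun i => dotProduct_nonneg_of_nonneg (hB i) ha
  refine IsGreatest.csSup_eq ⟨⟨WithLp.toLp 2 fun i => (a i : ℂ), ?_, ?_⟩, ?_⟩
  · rw [← pow_eq_one_iff_of_nonneg (norm_nonneg _) two_ne_zero, norm_sq_toLp_ofReal, haa]
  · rw [inner_toEuclideanLin_map_ofReal, haBa, Complex.norm_real, Real.norm_of_nonneg hr]
  · rintro _ ⟨x, hx, rfl⟩
    have hxx : (‖x ·‖) ⬝ᵥ (‖x ·‖) = 1 := by
      rw [← pow_eq_one_iff_of_nonneg (norm_nonneg x) two_ne_zero, EuclideanSpace.norm_sq_eq] at hx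
      simpa [dotProduct, sq] using hx
    calc _ ≤ (‖x ·‖) ⬝ᵥ B *ᵥ (‖x ·‖) := norm_inner_toEuclideanLin_map_ofReal_le hB x
      _ ≤ r := by simpa [hxx] using hquad (‖x ·‖)

/-- The Kac–Murdock–Szegő matrix. -/
def kmsMatrix (n : ℕ) (α : ℝ) : Matrix (Fin n) (Fin n) ℝ :=
  of fun i j => α ^ Nat.dist i j

def jmatReal (n : ℕ) (α : ℝ) : Matrix (Fin n) (Fin n) ℝ :=
  of fun r s => if r < s then α ^ ((s : ℕ) - r) else 0

theorem Jmat_eq_map_jmatReal (n : ℕ) (α : ℝ) : Jmat n α = (jmatReal n α).map (↑) := by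
  ext r s
  simp only [Jmat, jmatReal, map_apply, of_apply]
  split_ifs <;> push_cast <;> rfl

theorem jmatReal_nonneg {α : ℝ} (hα : 0 ≤ α) (n : ℕ) (r s : Fin n) : 0 ≤ jmatReal n α r s := by
  simp only [jmatReal, of_apply]
  split_ifs
  exacts [pow_nonneg hα _, le_rfl]

theorem jmatReal_add_transpose (n : ℕ) (α : ℝ) :
    jmatReal n α + (jmatReal n α)ᵀ = kmsMatrix n α - 1 := by
  ext i j
  simp only [jmatReal, kmsMatrix, Matrix.add_apply, Matrix.sub_apply, transpose_apply, of_apply,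
    one_apply]
  rcases lt_trichotomy i j with h | rfl | h
  · simp [h, h.ne, h.not_gt, Nat.dist_eq_sub_of_le (Fin.val_le_of_le h.le)]
  · simp
  · simp [h, h.ne', h.not_gt, Nat.dist_eq_sub_of_le_right (Fin.val_le_of_le h.le)]

theorem mul_sum_range_pow_mul_sin (α t θ : ℝ) (m : ℕ) :
    (1 - 2 * α * cos t + α ^ 2) * ∑ k ∈ range m, α ^ k * sin (θ + k * t)
      = sin θ - α * sin (θ - t) - α ^ m * (sin (θ + m * t) - α * sin (θ + m * t - t)) := by
  induction m with
  | zero => simp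
  | succ m ih =>
    have h1 : θ + (m + 1 : ℕ) * t = (θ + m * t) + t := by push_cast; ring
    rw [sum_range_succ, mul_add, ih, h1, add_sub_cancel_right, sin_add (θ + m * t) t,
      sin_sub (θ + m * t) t]
    ring

section KmsEigenvector

variable {α t φ : ℝ}

theorem mul_sum_range_pow_dist_mul_sin (hφ : sin (φ - t) = α * sin φ) (i : ℕ) :
    (1 - 2 * α * cos t + α ^ 2) * ∑ j ∈ range (i + 1), α ^ Nat.dist i j * sin (j * t + φ)
      = sin (i * t + φ) - α * sin ((i + 1) * t + φ) := by
  have hsum : ∑ j ∈ range (i + 1), α ^ Nat.dist i j * sin (j * t + φ)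
      = ∑ k ∈ range (i + 1), α ^ k * sin ((i * t + φ) + k * (-t)) := by
    rw [← sum_range_reflect]
    refine sum_congr rfl fun k hk => ?_
    have hki : k ≤ i := Nat.lt_succ_iff.mp (mem_range.mp hk)
    rw [Nat.add_sub_cancel, Nat.dist_eq_sub_of_le_right (Nat.sub_le i k), Nat.sub_sub_self hki,
      Nat.cast_sub hki]
    ring_nf
  have hgeom := mul_sum_range_pow_mul_sin α (-t) (i * t + φ) (i + 1)
  rw [cos_neg] at hgeom
  rw [hsum, hgeom]
  push_cast
  have e1 : i * t + φ + (i + 1) * -t = φ - t := by ring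
  have e2 : i * t + φ - -t = (i + 1) * t + φ := by ring
  rw [e1, e2, sub_neg_eq_add, sub_add_cancel, hφ]
  ring

theorem mul_sum_Ico_pow_dist_mul_sin (hφ : sin (φ - t) = α * sin φ) {n : ℕ}
    (hend : (n - 1) * t + 2 * φ = π) {i : ℕ} (hi : i < n) :
    (1 - 2 * α * cos t + α ^ 2) * ∑ j ∈ Ico (i + 1) n, α ^ Nat.dist i j * sin (j * t + φ)
      = α * sin ((i + 1) * t + φ) - α ^ 2 * sin (i * t + φ) := by
  have hsum : ∑ j ∈ Ico (i + 1) n, α ^ Nat.dist i j * sin (j * t + φ)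
      = α * ∑ k ∈ range (n - (i + 1)), α ^ k * sin (((i + 1) * t + φ) + k * t) := by
    rw [sum_Ico_eq_sum_range, mul_sum]
    refine sum_congr rfl fun k _ => ?_
    rw [Nat.dist_eq_sub_of_le (by omega), show i + 1 + k - i = k + 1 by omega, pow_succ]
    push_cast
    ring_nf
  rw [hsum, mul_left_comm, mul_sum_range_pow_mul_sin, Nat.cast_sub hi]
  push_cast
  -- The far end `j = n - 1` sits at angle `π - φ`, where the boundary condition is `hφ` again.
  have e1 : (i + 1) * t + φ + (n - (i + 1)) * t = π - (φ - t) := by linear_combination hend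
  have e2 : (i + 1) * t + φ - t = i * t + φ := by ring
  rw [e1, e2, show π - (φ - t) - t = π - φ by ring, sin_pi_sub, sin_pi_sub, hφ]
  ring

theorem kmsMatrix_mulVec_sin (hφ : sin (φ - t) = α * sin φ) {n : ℕ}
    (hend : (n - 1) * t + 2 * φ = π) :
    (1 - 2 * α * cos t + α ^ 2) • kmsMatrix n α *ᵥ (fun j => sin (j * t + φ))
      = (1 - α ^ 2) • fun j : Fin n => sin (j * t + φ) := by
  ext ⟨i, hi⟩
  have hsplit := sum_range_add_sum_Ico (fun j => α ^ Nat.dist i j * sin (j * t + φ)) hi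
  simp only [Pi.smul_apply, smul_eq_mul, mulVec, dotProduct, kmsMatrix, of_apply]
  rw [Fin.sum_univ_eq_sum_range (fun j => α ^ Nat.dist i j * sin (j * t + φ)), ← hsplit, mul_add,
    mul_sum_range_pow_dist_mul_sin hφ, mul_sum_Ico_pow_dist_mul_sin hφ hend hi]
  ring

end KmsEigenvector

noncomputable def expSub (α s : ℝ) : ℂ := Complex.exp (s * Complex.I) - α

section Phase

variable {α : ℝ}

theorem expSub_im (α s : ℝ) : (expSub α s).im = sin s := by
  simp [expSub, Complex.exp_ofReal_mul_I_im]

theorem expSub_zero (α : ℝ) : expSub α 0 = ((1 - α : ℝ) : ℂ) := by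
  simp [expSub]

theorem expSub_ne_zero {s : ℝ} (hs : sin s ≠ 0) : expSub α s ≠ 0 := fun h =>
  hs (by rw [← expSub_im α s, h, Complex.zero_im])

theorem arg_expSub_pos {s : ℝ} (hs0 : 0 < s) (hsπ : s < π) : 0 < (expSub α s).arg := by
  have him : 0 < (expSub α s).im := expSub_im α s ▸ sin_pos_of_pos_of_lt_pi hs0 hsπ
  refine (Complex.arg_nonneg_iff.mpr him.le).lt_of_ne fun h => ?_
  exact him.ne' (Complex.arg_eq_zero_iff.mp h.symm).2

theorem continuousOn_arg_expSub (hα : α < 1) :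
    ContinuousOn (fun s => (expSub α s).arg) (Set.Ico 0 π) := by
  have hcont : Continuous (expSub α) := by unfold expSub; fun_prop
  refine fun s hs => (Complex.continuousAt_arg ?_).comp hcont.continuousAt |>.continuousWithinAt
  rcases hs.1.eq_or_lt with rfl | hs0
  · rw [expSub_zero]
    exact Complex.ofReal_mem_slitPlane.mpr (by linarith)
  · exact Or.inr (expSub_im α s ▸ (sin_pos_of_pos_of_lt_pi hs0 hs.2).ne')

theorem sin_arg_expSub_sub {s : ℝ} (hz : expSub α s ≠ 0) :
    sin ((expSub α s).arg - s) = α * sin (expSub α s).arg := by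
  have hrot : expSub α s * Complex.exp (↑(-s) * Complex.I)
      = 1 - α * Complex.exp (↑(-s) * Complex.I) := by
    rw [expSub, sub_mul, ← Complex.exp_add]
    push_cast
    ring_nf
    rw [Complex.exp_zero]
  have hpolar : expSub α s * Complex.exp (↑(-s) * Complex.I)
      = ‖expSub α s‖ * Complex.exp (↑((expSub α s).arg - s) * Complex.I) := by
    conv_lhs => rw [← Complex.norm_mul_exp_arg_mul_I (expSub α s)]
    rw [mul_assoc, ← Complex.exp_add]
    push_cast
    ring_nf
  have him := congrArg Complex.im (hpolar.symm.trans hrot)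
  simp only [Complex.exp_ofReal_mul_I_im, Complex.sub_im, Complex.one_im, Complex.mul_im,
    Complex.ofReal_re, Complex.ofReal_im, Complex.exp_ofReal_mul_I_re, sin_neg] at him
  have hnorm : ‖expSub α s‖ * sin (expSub α s).arg = sin s := by
    rw [Complex.norm_mul_sin_arg, expSub_im]
  refine mul_left_cancel₀ (norm_ne_zero_iff.mpr hz) ?_
  linear_combination him - α * hnorm

/-- `q(s) = Im ((e^{is} - α)² e^{i(ν-1)s})`, read off in polar form. -/
theorem sin_sub_two_mul_sin_add_sq_mul_sin (ν α s : ℝ) :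
    sin ((ν + 1) * s) - 2 * α * sin (ν * s) + α ^ 2 * sin ((ν - 1) * s)
      = ‖expSub α s‖ ^ 2 * sin ((ν - 1) * s + 2 * (expSub α s).arg) := by
  have hexpand : expSub α s ^ 2 * Complex.exp (↑((ν - 1) * s) * Complex.I)
      = Complex.exp (↑((ν + 1) * s) * Complex.I) - ↑(2 * α) * Complex.exp (↑(ν * s) * Complex.I)
        + ↑(α ^ 2) * Complex.exp (↑((ν - 1) * s) * Complex.I) := by
    have h1 : Complex.exp (↑((ν + 1) * s) * Complex.I)
        = Complex.exp (s * Complex.I) ^ 2 * Complex.exp (↑((ν - 1) * s) * Complex.I) := by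
      rw [sq, ← Complex.exp_add, ← Complex.exp_add]; push_cast; ring_nf
    have h2 : Complex.exp (↑(ν * s) * Complex.I)
        = Complex.exp (s * Complex.I) * Complex.exp (↑((ν - 1) * s) * Complex.I) := by
      rw [← Complex.exp_add]; push_cast; ring_nf
    rw [h1, h2, expSub]
    push_cast
    ring
  have hpolar : expSub α s ^ 2 * Complex.exp (↑((ν - 1) * s) * Complex.I)
      = ↑(‖expSub α s‖ ^ 2)
        * Complex.exp (↑((ν - 1) * s + 2 * (expSub α s).arg) * Complex.I) := by
    conv_lhs => rw [← Complex.norm_mul_exp_arg_mul_I (expSub α s)]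
    rw [mul_pow, sq (Complex.exp _), mul_assoc, ← Complex.exp_add, ← Complex.exp_add]
    push_cast
    ring_nf
  have him := congrArg Complex.im (hpolar.symm.trans hexpand)
  simp only [Complex.sub_im, Complex.add_im, Complex.im_ofReal_mul,
    Complex.exp_ofReal_mul_I_im] at him
  linarith

theorem phase_eq_pi_of_isLeast {n : ℕ} (hn : 1 ≤ n) (hα : α < 1) {t₁ : ℝ}
    (ht₁ : IsLeast {t : ℝ | t ∈ Set.Ioo 0 π ∧ sin ((n + 1) * t) - 2 * α * sin (n * t)
      + α ^ 2 * sin ((n - 1) * t) = 0} t₁) :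
    (n - 1) * t₁ + 2 * (expSub α t₁).arg = π := by
  obtain ⟨⟨⟨ht0, htπ⟩, hq⟩, hmin⟩ := ht₁
  set g : ℝ → ℝ := fun s => (n - 1) * s + 2 * (expSub α s).arg
  have hn1 : (1 : ℝ) ≤ n := by exact_mod_cast hn
  have hz : expSub α t₁ ≠ 0 := expSub_ne_zero (sin_pos_of_pos_of_lt_pi ht0 htπ).ne'
  have hsin : sin (g t₁) = 0 := by
    rw [sin_sub_two_mul_sin_add_sq_mul_sin] at hq
    exact (mul_eq_zero.mp hq).resolve_left (pow_ne_zero 2 (norm_ne_zero_iff.mpr hz))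
  have hpos : 0 < g t₁ := by
    have := arg_expSub_pos (α := α) ht0 htπ
    have : 0 ≤ (n - 1) * t₁ := mul_nonneg (by linarith) ht0.le
    simp only [g]
    linarith
  have hlt : g t₁ < 2 * π := by
    by_contra! hge
    have hg0 : g 0 = 0 := by
      simp only [g, expSub_zero, Complex.arg_ofReal_of_nonneg (sub_nonneg.mpr hα.le)]
      ring
    have hcont : ContinuousOn g (Set.Icc 0 t₁) :=
      (continuous_const.mul continuous_id).continuousOn.add <|
        continuousOn_const.mul <|
          (continuousOn_arg_expSub hα).mono fun s hs => ⟨hs.1, hs.2.trans_lt htπ⟩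
    obtain ⟨s, hs, hgs⟩ := intermediate_value_Ioo ht0.le hcont
      (show π ∈ Set.Ioo (g 0) (g t₁) by rw [hg0]; constructor <;> linarith [pi_pos])
    have hqs : sin ((n + 1) * s) - 2 * α * sin (n * s) + α ^ 2 * sin ((n - 1) * s) = 0 := by
      rw [sin_sub_two_mul_sin_add_sq_mul_sin]
      simp only [g] at hgs
      rw [hgs, sin_pi, mul_zero]
    exact (hmin ⟨⟨hs.1, hs.2.trans htπ⟩, hqs⟩).not_gt hs.2
  have hshift : sin (g t₁ - π) = 0 := by rw [sin_sub_pi, hsin, neg_zero]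
  have := (sin_eq_zero_iff_of_lt_of_lt (by linarith) (by linarith)).mp hshift
  linarith

end Phase

theorem lt_one_of_le_sqrt_cos {n : ℕ} (hn : 1 ≤ n) {α : ℝ}
    (hα : α ≤ √(cos (2 * π / (n + 1)))) : α < 1 := by
  have hn1 : (1 : ℝ) ≤ n := by exact_mod_cast hn
  have h0 : 0 < 2 * π / (n + 1) := by positivity
  have h2π : 2 * π / (n + 1) < 2 * π := div_lt_self (by positivity) (by linarith)
  have hcos : cos (2 * π / (n + 1)) < 1 :=
    (cos_le_one _).lt_of_ne fun h => h0.ne' ((cos_eq_one_iff_of_lt_of_lt (by linarith) h2π).mp h)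
  calc α ≤ √(cos (2 * π / (n + 1))) := hα
    _ < 1 := by rw [sqrt_lt' one_pos, one_pow]; exact hcos

/-- For `n ≥ 4` and `0 ≤ α ≤ √(cos(2π/(n+1)))`, with `t₁` the smallest zero
in `(0, π)` of `q_{n,α}(t) = sin((n+1)t) − 2α sin(nt) + α² sin((n−1)t)`,
the numerical radius of `J_n(α)` is `α(cos t₁ − α)/(1 − 2α cos t₁ + α²)`. -/
theorem numRadius_Jmat_small_alpha (n : ℕ) (hn : 4 ≤ n) (α : ℝ)
    (hα0 : 0 ≤ α) (hα1 : α ≤ Real.sqrt (Real.cos (2 * Real.pi / ((n : ℝ) + 1))))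
    (t₁ : ℝ)
    (ht₁ : IsLeast {t : ℝ | t ∈ Set.Ioo 0 Real.pi ∧
      Real.sin (((n : ℝ) + 1) * t) - 2 * α * Real.sin ((n : ℝ) * t)
        + α ^ 2 * Real.sin (((n : ℝ) - 1) * t) = 0} t₁) :
    numRadius (Jmat n α)
      = α * (Real.cos t₁ - α) / (1 - 2 * α * Real.cos t₁ + α ^ 2) := by
  have hn1 : 1 ≤ n := by omega
  have hα := lt_one_of_le_sqrt_cos hn1 hα1
  have hphase := phase_eq_pi_of_isLeast hn1 hα ht₁
  obtain ⟨⟨⟨ht0, htπ⟩, -⟩, -⟩ := ht₁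
  set φ := (expSub α t₁).arg
  have hφ : sin (φ - t₁) = α * sin φ :=
    sin_arg_expSub_sub (expSub_ne_zero (sin_pos_of_pos_of_lt_pi ht0 htπ).ne')
  have hρ : 0 < 1 - 2 * α * cos t₁ + α ^ 2 := by
    nlinarith [sin_sq_add_cos_sq t₁, sq_nonneg (α - cos t₁), sin_pos_of_pos_of_lt_pi ht0 htπ]
  have hu : ∀ j : Fin n, 0 < sin (j * t₁ + φ) := fun j => by
    have hj : (j : ℝ) ≤ n - 1 := by
      have : (j : ℕ) + 1 ≤ n := j.isLt
      rw [le_sub_iff_add_le]; exact_mod_cast this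
    have := arg_expSub_pos (α := α) ht0 htπ
    apply sin_pos_of_pos_of_lt_pi (by positivity)
    nlinarith
  have : NeZero n := ⟨by omega⟩
  rw [Jmat_eq_map_jmatReal]
  refine numRadius_map_ofReal_eq (jmatReal_nonneg hα0 n) hu ?_
  rw [jmatReal_add_transpose, sub_mulVec, one_mulVec, ← smul_right_inj hρ.ne', smul_sub,
    kmsMatrix_mulVec_sin hφ (by linarith), smul_smul, ← sub_smul]
  congr 1
  rw [mul_left_comm, mul_div_cancel₀ _ hρ.ne']
  ring
end
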